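/- arXiv:2510.05766 — 9 statements merged into one kernel-verified Lean document; each statement's English description precedes it below -/
import Mathlib

section
/- If M is a semi-involutory matrix (i.e., there exist nonsingular diagonal matrices D, D' with M⁻¹ = D·M·D'), then for any nonsingular diagonal matrices P, Q, the matrix P·M·Q is also semi-involutory. -/
/-- If `M` is semi-involutory, then `P * M * Q` is semi-involutory for any nonsingular
diagonal `P`, `Q`. -/
theorem stmt_1 {F : Type*} [Field F] {n : ℕ}
    (M : Matrix (Fin n) (Fin n) F) (hM : IsUnit M.det)
    (hSI : ∃ d d' : Fin n → F, (∀ i, d i ≠ 0) ∧ (∀ i, d' i ≠ 0) ∧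
      M⁻¹ = Matrix.diagonal d * M * Matrix.diagonal d')
    (p q : Fin n → F) (hp : ∀ i, p i ≠ 0) (hq : ∀ i, q i ≠ 0) :
    ∃ d d' : Fin n → F, (∀ i, d i ≠ 0) ∧ (∀ i, d' i ≠ 0) ∧
      (Matrix.diagonal p * M * Matrix.diagonal q)⁻¹ =
        Matrix.diagonal d * (Matrix.diagonal p * M * Matrix.diagonal q) * Matrix.diagonal d' := by
  obtain ⟨d, d', hd, hd', hEq⟩ := hSI
  refine ⟨fun i => (q i)⁻¹ * d i * (p i)⁻¹, fun i => (q i)⁻¹ * d' i * (p i)⁻¹,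
    fun i => by simp [hp i, hq i, hd i], fun i => by simp [hp i, hq i, hd' i], ?_⟩
  have hPP : Matrix.diagonal (fun i => (p i)⁻¹) * Matrix.diagonal p = 1 := by
    rw [Matrix.diagonal_mul_diagonal]
    have : (fun i => (p i)⁻¹ * p i) = fun _ => (1 : F) :=
      funext fun i => inv_mul_cancel₀ (hp i)
    rw [this, Matrix.diagonal_one]
  have hQQ : Matrix.diagonal q * Matrix.diagonal (fun i => (q i)⁻¹) = 1 := by
    rw [Matrix.diagonal_mul_diagonal]
    have : (fun i => q i * (q i)⁻¹) = fun _ => (1 : F) :=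
      funext fun i => mul_inv_cancel₀ (hq i)
    rw [this, Matrix.diagonal_one]
  have h1 : Matrix.diagonal (fun i => (q i)⁻¹ * d i * (p i)⁻¹) =
      Matrix.diagonal (fun i => (q i)⁻¹) * Matrix.diagonal d *
        Matrix.diagonal (fun i => (p i)⁻¹) := by
    rw [Matrix.diagonal_mul_diagonal, Matrix.diagonal_mul_diagonal]
  have h2 : Matrix.diagonal (fun i => (q i)⁻¹ * d' i * (p i)⁻¹) =
      Matrix.diagonal (fun i => (q i)⁻¹) * Matrix.diagonal d' *
        Matrix.diagonal (fun i => (p i)⁻¹) := by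
    rw [Matrix.diagonal_mul_diagonal, Matrix.diagonal_mul_diagonal]
  have hip : (Matrix.diagonal p)⁻¹ = Matrix.diagonal (fun i => (p i)⁻¹) :=
    Matrix.inv_eq_right_inv (by
      rw [Matrix.diagonal_mul_diagonal]
      have : (fun i => p i * (p i)⁻¹) = fun _ => (1 : F) :=
        funext fun i => mul_inv_cancel₀ (hp i)
      rw [this, Matrix.diagonal_one])
  have hiq : (Matrix.diagonal q)⁻¹ = Matrix.diagonal (fun i => (q i)⁻¹) :=
    Matrix.inv_eq_right_inv (by
      rw [Matrix.diagonal_mul_diagonal]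
      have : (fun i => q i * (q i)⁻¹) = fun _ => (1 : F) :=
        funext fun i => mul_inv_cancel₀ (hq i)
      rw [this, Matrix.diagonal_one])
  rw [Matrix.mul_inv_rev, Matrix.mul_inv_rev, hEq, hip, hiq, h1, h2]
  calc Matrix.diagonal (fun i => (q i)⁻¹) *
        (Matrix.diagonal d * M * Matrix.diagonal d' *
          Matrix.diagonal (fun i => (p i)⁻¹))
      = Matrix.diagonal (fun i => (q i)⁻¹) * Matrix.diagonal d *
        ((Matrix.diagonal (fun i => (p i)⁻¹) * Matrix.diagonal p) * M *
          (Matrix.diagonal q * Matrix.diagonal (fun i => (q i)⁻¹))) *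
        (Matrix.diagonal d' * Matrix.diagonal (fun i => (p i)⁻¹)) := by
        rw [hPP, hQQ]; noncomm_ring
    _ = Matrix.diagonal (fun i => (q i)⁻¹) * Matrix.diagonal d *
          Matrix.diagonal (fun i => (p i)⁻¹) *
        (Matrix.diagonal p * M * Matrix.diagonal q) *
        (Matrix.diagonal (fun i => (q i)⁻¹) * Matrix.diagonal d' *
          Matrix.diagonal (fun i => (p i)⁻¹)) := by noncomm_ring
end

section
/- Let F be a finite field of characteristic 2, and let M1 be a nonsingular n×n matrix over F whose first row and first column consist entirely of 1's, with all entries nonzero, and let M2 = (d_ij) be its inverse. For nonsingular diagonal matrices D1, D2 (with the (1,1)-entry of D2 equal to 1), the matrix M = D1·M1·D2 is orthogonal (M·Mᵀ = I) if and only if (M1⁻¹)ᵀ = D1²·M1·D2²; moreover in this case D1 = Diag(√d_11, √d_12, ..., √d_1n) and D2 = Diag(1, √(d_21/d_11), ..., √(d_n1/d_11)). -/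
open Matrix

theorem stmt_7_key {F : Type*} [Field F] {n : ℕ}
    (M1 : Matrix (Fin n) (Fin n) F) (hM1 : IsUnit M1.det)
    (lam θ : Fin n → F) (hlam : ∀ i, lam i ≠ 0) (hθ : ∀ i, θ i ≠ 0) :
    ((Matrix.diagonal lam * M1 * Matrix.diagonal θ) *
        (Matrix.diagonal lam * M1 * Matrix.diagonal θ)ᵀ = 1 ↔
      M1⁻¹ = Matrix.diagonal (fun i => θ i ^ 2) * M1ᵀ *
        Matrix.diagonal (fun i => lam i ^ 2)) := by
  set A := Matrix.diagonal lam with hAdef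
  set B := Matrix.diagonal θ with hBdef
  have hA : IsUnit A.det := by
    rw [hAdef, det_diagonal]
    exact isUnit_iff_ne_zero.2 (Finset.prod_ne_zero_iff.2 fun i _ => hlam i)
  have hAi : A⁻¹ * A = 1 := nonsing_inv_mul A hA
  have hAi' : A * A⁻¹ = 1 := mul_nonsing_inv A hA
  have hBB : B * B = Matrix.diagonal (fun i => θ i ^ 2) := by
    rw [hBdef, diagonal_mul_diagonal]; congr! 1 with i; ring
  have hAA : A * A = Matrix.diagonal (fun i => lam i ^ 2) := by
    rw [hAdef, diagonal_mul_diagonal]; congr! 1 with i; ring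
  have hT : (A * M1 * B)ᵀ = B * (M1ᵀ * A) := by
    simp [hAdef, hBdef, transpose_mul, Matrix.mul_assoc]
  rw [hT]
  constructor
  · intro h
    refine inv_eq_right_inv ?_
    rw [← hBB, ← hAA]
    calc M1 * (B * B * M1ᵀ * (A * A))
        = A⁻¹ * (A * M1 * B * (B * (M1ᵀ * A))) * A := by
          simp only [← Matrix.mul_assoc]
          rw [hAi, Matrix.one_mul]
      _ = 1 := by rw [h]; simp [hAi]
  · intro h
    have h1 : M1 * (Matrix.diagonal (fun i => θ i ^ 2) * M1ᵀ *
        Matrix.diagonal (fun i => lam i ^ 2)) = 1 := by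
      rw [← h]; exact mul_nonsing_inv M1 hM1
    rw [← hBB, ← hAA] at h1
    calc A * M1 * B * (B * (M1ᵀ * A))
        = A * (M1 * (B * B * M1ᵀ * (A * A))) * A⁻¹ := by
          simp only [← Matrix.mul_assoc]
          rw [Matrix.mul_assoc _ A A⁻¹, hAi', Matrix.mul_one]
      _ = 1 := by rw [h1]; simp [hAi']

/-- Over a finite field of characteristic `2`, for `M1` nonsingular with all entries nonzero,
first row and column all ones, and nonsingular diagonal `D1 = diag lam`, `D2 = diag θ` with
`θ 0 = 1`, the matrix `M = D1 * M1 * D2` is orthogonal iff `(M1⁻¹)ᵀ = D1² * M1 * D2²`;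
moreover in this case `lam i² = (M1⁻¹) 0 i` and `θ i² = (M1⁻¹) i 0 / (M1⁻¹) 0 0`. -/
theorem stmt_7 {F : Type*} [Field F] [Fintype F] [CharP F 2] {n : ℕ} (hn : 0 < n)
    (M1 : Matrix (Fin n) (Fin n) F) (hM1 : IsUnit M1.det)
    (hrow : ∀ j, M1 ⟨0, hn⟩ j = 1) (hcol : ∀ i, M1 i ⟨0, hn⟩ = 1)
    (hne : ∀ i j, M1 i j ≠ 0)
    (lam θ : Fin n → F) (hlam : ∀ i, lam i ≠ 0) (hθ : ∀ i, θ i ≠ 0)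
    (hθ0 : θ ⟨0, hn⟩ = 1) :
    ((Matrix.diagonal lam * M1 * Matrix.diagonal θ) *
        (Matrix.diagonal lam * M1 * Matrix.diagonal θ)ᵀ = 1 ↔
      (M1⁻¹)ᵀ = Matrix.diagonal (fun i => lam i ^ 2) * M1 *
        Matrix.diagonal (fun i => θ i ^ 2)) ∧
    ((Matrix.diagonal lam * M1 * Matrix.diagonal θ) *
        (Matrix.diagonal lam * M1 * Matrix.diagonal θ)ᵀ = 1 →
      (∀ i, lam i ^ 2 = M1⁻¹ ⟨0, hn⟩ i) ∧
      (∀ i, θ i ^ 2 = M1⁻¹ i ⟨0, hn⟩ / M1⁻¹ ⟨0, hn⟩ ⟨0, hn⟩)) := by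
  have key := stmt_7_key M1 hM1 lam θ hlam hθ
  set z : Fin n := ⟨0, hn⟩
  have bridge : ((M1⁻¹)ᵀ = Matrix.diagonal (fun i => lam i ^ 2) * M1 *
        Matrix.diagonal (fun i => θ i ^ 2)) ↔
      M1⁻¹ = Matrix.diagonal (fun i => θ i ^ 2) * M1ᵀ *
        Matrix.diagonal (fun i => lam i ^ 2) := by
    constructor
    · intro h
      have := congrArg Matrix.transpose h
      simpa [transpose_mul, Matrix.mul_assoc] using this
    · intro h
      have := congrArg Matrix.transpose h
      simpa [transpose_mul, Matrix.mul_assoc] using this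
  constructor
  · rw [bridge]; exact key
  · intro h
    have hinv := key.1 h
    have hent : ∀ i j, M1⁻¹ i j = θ i ^ 2 * M1 j i * lam j ^ 2 := by
      intro i j
      rw [hinv]
      simp [Matrix.mul_diagonal, Matrix.diagonal_mul]
    constructor
    · intro i
      rw [hent z i, hθ0, hcol i]
      ring
    · intro i
      rw [hent i z, hent z z, hrow i, hrow z, hθ0]
      have hz := hlam z
      field_simp
end

section
/- Let M be a nonsingular n×n matrix over a field such that M = D·Mᵀ·D' for some nonsingular diagonal matrices D, D'. Then M is semi-involutory if and only if M is semi-orthogonal. -/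
open Matrix

/-- If `M = D * Mᵀ * D'` for some nonsingular diagonal `D`, `D'`, then `M` is
semi-involutory iff it is semi-orthogonal. -/
theorem stmt_8 {F : Type*} [Field F] {n : ℕ}
    (M : Matrix (Fin n) (Fin n) F) (hM : IsUnit M.det)
    (d d' : Fin n → F) (hd : ∀ i, d i ≠ 0) (hd' : ∀ i, d' i ≠ 0)
    (hsym : M = Matrix.diagonal d * Mᵀ * Matrix.diagonal d') :
    (∃ e e' : Fin n → F, (∀ i, e i ≠ 0) ∧ (∀ i, e' i ≠ 0) ∧
        M⁻¹ = Matrix.diagonal e * M * Matrix.diagonal e') ↔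
    (∃ e e' : Fin n → F, (∀ i, e i ≠ 0) ∧ (∀ i, e' i ≠ 0) ∧
        (M⁻¹)ᵀ = Matrix.diagonal e * M * Matrix.diagonal e') := by
  have hT : Mᵀ = Matrix.diagonal d' * M * Matrix.diagonal d := by
    conv_lhs => rw [hsym]
    simp [Matrix.transpose_mul, Matrix.mul_assoc]
  have hdinv : (Matrix.diagonal d)⁻¹ = Matrix.diagonal (fun i => (d i)⁻¹) := by
    apply Matrix.inv_eq_right_inv
    rw [Matrix.diagonal_mul_diagonal]
    convert Matrix.diagonal_one
    exact mul_inv_cancel₀ (hd _)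
  have hd'inv : (Matrix.diagonal d')⁻¹ = Matrix.diagonal (fun i => (d' i)⁻¹) := by
    apply Matrix.inv_eq_right_inv
    rw [Matrix.diagonal_mul_diagonal]
    convert Matrix.diagonal_one
    exact mul_inv_cancel₀ (hd' _)
  have key : (M⁻¹)ᵀ = Matrix.diagonal (fun i => (d i)⁻¹) * M⁻¹
      * Matrix.diagonal (fun i => (d' i)⁻¹) := by
    rw [Matrix.transpose_nonsing_inv, hT, Matrix.mul_inv_rev, Matrix.mul_inv_rev,
      hdinv, hd'inv, Matrix.mul_assoc]
  have hdd : Matrix.diagonal d * Matrix.diagonal (fun i => (d i)⁻¹) = 1 := by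
    rw [Matrix.diagonal_mul_diagonal]
    convert Matrix.diagonal_one
    exact mul_inv_cancel₀ (hd _)
  have hdd' : Matrix.diagonal (fun i => (d' i)⁻¹) * Matrix.diagonal d' = 1 := by
    rw [Matrix.diagonal_mul_diagonal]
    convert Matrix.diagonal_one
    exact inv_mul_cancel₀ (hd' _)
  have key2 : M⁻¹ = Matrix.diagonal d * (M⁻¹)ᵀ * Matrix.diagonal d' := by
    rw [key, ← Matrix.mul_assoc, ← Matrix.mul_assoc, hdd, Matrix.one_mul,
      Matrix.mul_assoc, hdd', Matrix.mul_one]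
  constructor
  · rintro ⟨e, e', he, he', hEq⟩
    refine ⟨fun i => (d i)⁻¹ * e i, fun i => e' i * (d' i)⁻¹,
      fun i => mul_ne_zero (inv_ne_zero (hd i)) (he i),
      fun i => mul_ne_zero (he' i) (inv_ne_zero (hd' i)), ?_⟩
    rw [key, hEq, ← Matrix.diagonal_mul_diagonal, ← Matrix.diagonal_mul_diagonal]
    simp only [Matrix.mul_assoc]
  · rintro ⟨e, e', he, he', hEq⟩
    refine ⟨fun i => d i * e i, fun i => e' i * d' i,
      fun i => mul_ne_zero (hd i) (he i),
      fun i => mul_ne_zero (he' i) (hd' i), ?_⟩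
    rw [key2, hEq, ← Matrix.diagonal_mul_diagonal, ← Matrix.diagonal_mul_diagonal]
    simp only [Matrix.mul_assoc]
end

section
/- Let M1 = (c_ij) be an n×n matrix over a field whose first row and first column consist entirely of 1's. If M1 = D·M1ᵀ·D' for some nonsingular diagonal matrices D = Diag(α1,...,αn) and D' = Diag(β1,...,βn), then M1 is symmetric. -/
open Matrix

/-- If `M1` has first row and first column all ones and `M1 = D * M1ᵀ * D'` for some
nonsingular diagonal matrices `D`, `D'`, then `M1` is symmetric. -/
theorem stmt_9 {F : Type*} [Field F] {n : ℕ} (hn : 0 < n)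
    (M1 : Matrix (Fin n) (Fin n) F)
    (hrow : ∀ j, M1 ⟨0, hn⟩ j = 1) (hcol : ∀ i, M1 i ⟨0, hn⟩ = 1)
    (α β : Fin n → F) (hα : ∀ i, α i ≠ 0) (hβ : ∀ i, β i ≠ 0)
    (h : M1 = Matrix.diagonal α * M1ᵀ * Matrix.diagonal β) :
    M1 = M1ᵀ := by
  have key : ∀ i j, M1 i j = α i * M1 j i * β j := by
    intro i j
    have := congrFun (congrFun h i) j
    simpa [Matrix.mul_apply, Matrix.diagonal, Finset.sum_ite_eq, Finset.sum_ite_eq',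
      Matrix.transpose_apply, mul_assoc] using this
  set z : Fin n := ⟨0, hn⟩
  have hβj : ∀ j, α z * β j = 1 := by
    intro j
    have := key z j
    rw [hrow j, hcol j] at this
    linear_combination -this
  have hαi : ∀ i, α i * β z = 1 := by
    intro i
    have := key i z
    rw [hcol i, hrow i] at this
    linear_combination -this
  ext i j
  have h1 := hβj j
  have h2 := hαi i
  have h0 := hβj z
  have hk := key i j
  rw [Matrix.transpose_apply, hk]
  have : α i * β j = 1 := by
    have e1 : α i = (β z)⁻¹ := eq_inv_of_mul_eq_one_left h2
    have e2 : β j = (α z)⁻¹ := eq_inv_of_mul_eq_one_right h1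
    rw [e1, e2, ← mul_inv, mul_comm (β z) (α z), h0, inv_one]
  linear_combination M1 j i * this
end

section
/- Let M1 be a 3×3 semi-involutory matrix over a finite field of characteristic 2 with all entries nonzero, whose first row and first column consist entirely of 1's. Then M1 is symmetric. -/
/-- A `3×3` semi-involutory matrix over a finite field of characteristic `2`, with all
entries nonzero and first row and column all ones, is symmetric (i.e. `b = c`). -/
theorem stmt_10 {F : Type*} [Field F] [Fintype F] [CharP F 2]
    (a b c d : F) (ha : a ≠ 0) (hb : b ≠ 0) (hc : c ≠ 0) (hd : d ≠ 0)
    (hdet : IsUnit (!![1, 1, 1; 1, a, b; 1, c, d] : Matrix (Fin 3) (Fin 3) F).det)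
    (hSI : ∃ α β : Fin 3 → F, (∀ i, α i ≠ 0) ∧ (∀ i, β i ≠ 0) ∧
      (!![1, 1, 1; 1, a, b; 1, c, d] : Matrix (Fin 3) (Fin 3) F)⁻¹ =
        Matrix.diagonal α * !![1, 1, 1; 1, a, b; 1, c, d] * Matrix.diagonal β) :
    b = c := by
  obtain ⟨α, β, hα, hβ, hinv⟩ := hSI
  set M : Matrix (Fin 3) (Fin 3) F := !![1, 1, 1; 1, a, b; 1, c, d] with hM
  have h1 : M * M⁻¹ = 1 := Matrix.mul_nonsing_inv M hdet
  rw [hinv] at h1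
  have e01 := congrFun (congrFun h1 0) 1
  have e10 := congrFun (congrFun h1 1) 0
  simp [hM, Matrix.mul_apply, Matrix.diagonal, Fin.sum_univ_three,
    Matrix.one_apply] at e01 e10
  have eq1 : α 0 + α 1 * a + α 2 * c = 0 :=
    (mul_eq_zero.mp (by linear_combination e01 :
      (α 0 + α 1 * a + α 2 * c) * β 1 = 0)).resolve_right (hβ 1)
  have eq2 : α 0 + α 1 * a + α 2 * b = 0 :=
    (mul_eq_zero.mp (by linear_combination e10 :
      (α 0 + α 1 * a + α 2 * b) * β 0 = 0)).resolve_right (hβ 0)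
  have key : α 2 * b = α 2 * c := by linear_combination eq2 - eq1
  exact mul_left_cancel₀ (hα 2) key
end

section
/- Let M = (m_ij) be an n×n matrix over a field of characteristic 2, and write b_i = Σ_{j=1}^{n-1} m_ij and c_j = Σ_{i=1}^{n-1} m_ij for 1 ≤ i, j ≤ n-1. Then M is orthogonal (M·Mᵀ = I) if and only if: m_in = b_i + 1 and m_nj = c_j + 1 for all 1 ≤ i, j ≤ n-1, m_nn = Σ_{i=1}^{n-1}(b_i + 1) + 1, and for all 1 ≤ k < l ≤ n-1 both Σ_{i≠j, 1≤i,j≤n-1} m_ki·m_lj + b_k + b_l = 1 and Σ_{i≠j, 1≤i,j≤n-1} m_ik·m_jl + c_k + c_l = 1. -/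
open Matrix

open Finset in
lemma aux_sq_one {F : Type*} [Field F] [CharP F 2] (x : F) (h : x * x = 1) : x = 1 := by
  have h2' := CharTwo.two_eq_zero (R := F)
  have h2 : (x - 1)^2 = 0 := by linear_combination h + (1 - x) * h2'
  have := pow_eq_zero_iff (n := 2) (two_ne_zero) |>.mp h2
  linear_combination this

open Finset in
lemma aux_off {F : Type*} [Field F] [CharP F 2] {m : ℕ} (f g : Fin m → F) :
    ∑ i : Fin m, ∑ j ∈ Finset.univ.erase i, f i * g j
      = (∑ i, f i) * (∑ i, g i) + ∑ i, f i * g i := by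
  simp only [← Finset.mul_sum, Finset.sum_erase_eq_sub (Finset.mem_univ _), mul_sub,
    Finset.sum_sub_distrib, CharTwo.sub_eq_add, Finset.sum_add_distrib, ← Finset.sum_mul]

open Finset in
/-- General form of orthogonal matrices over a field of characteristic `2`. -/
theorem stmt_11 {F : Type*} [Field F] [CharP F 2] {m : ℕ}
    (M : Matrix (Fin (m + 1)) (Fin (m + 1)) F) (b c : Fin m → F)
    (hb : ∀ i, b i = ∑ j : Fin m, M i.castSucc j.castSucc)
    (hc : ∀ j, c j = ∑ i : Fin m, M i.castSucc j.castSucc) :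
    M * Mᵀ = 1 ↔
      ((∀ i : Fin m, M i.castSucc (Fin.last m) = b i + 1) ∧
       (∀ j : Fin m, M (Fin.last m) j.castSucc = c j + 1) ∧
       M (Fin.last m) (Fin.last m) = (∑ i : Fin m, (b i + 1)) + 1 ∧
       (∀ k l : Fin m, k < l →
         (∑ i : Fin m, ∑ j ∈ Finset.univ.erase i,
             M k.castSucc i.castSucc * M l.castSucc j.castSucc) + b k + b l = 1 ∧
         (∑ i : Fin m, ∑ j ∈ Finset.univ.erase i,
             M i.castSucc k.castSucc * M j.castSucc l.castSucc) + c k + c l = 1)) := by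
  have htwo := CharTwo.two_eq_zero (R := F)
  constructor
  · intro h
    have hMT : Mᵀ * M = 1 := mul_eq_one_comm.mp h
    have hrow : ∀ k l, ∑ j, M k j * M l j = if k = l then (1:F) else 0 := by
      intro k l
      have := congrFun (congrFun h k) l
      simpa [Matrix.mul_apply, Matrix.one_apply, Matrix.transpose_apply] using this
    have hcol : ∀ k l, ∑ i, M i k * M i l = if k = l then (1:F) else 0 := by
      intro k l
      have := congrFun (congrFun hMT k) l
      simpa [Matrix.mul_apply, Matrix.one_apply, Matrix.transpose_apply] using this
    have rowsum : ∀ k, ∑ j, M k j = 1 := by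
      intro k
      refine aux_sq_one _ ?_
      rw [CharTwo.sum_mul_self]
      simpa using hrow k k
    have colsum : ∀ k, ∑ i, M i k = 1 := by
      intro k
      refine aux_sq_one _ ?_
      rw [CharTwo.sum_mul_self]
      simpa using hcol k k
    have h1 : ∀ i : Fin m, M i.castSucc (Fin.last m) = b i + 1 := by
      intro i
      have h0 := rowsum i.castSucc
      rw [Fin.sum_univ_castSucc] at h0
      linear_combination h0 + hb i - b i * htwo
    have h2 : ∀ j : Fin m, M (Fin.last m) j.castSucc = c j + 1 := by
      intro j
      have h0 := colsum j.castSucc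
      rw [Fin.sum_univ_castSucc] at h0
      linear_combination h0 + hc j - c j * htwo
    refine ⟨h1, h2, ?_, ?_⟩
    · have h0 := colsum (Fin.last m)
      rw [Fin.sum_univ_castSucc] at h0
      have e : ∑ i : Fin m, M i.castSucc (Fin.last m) = ∑ i : Fin m, (b i + 1) :=
        Finset.sum_congr rfl fun i _ => h1 i
      linear_combination h0 - e - (∑ i : Fin m, (b i + 1)) * htwo
    · intro k l hkl
      constructor
      · have hne : k.castSucc ≠ l.castSucc := by
          simpa [Fin.castSucc_inj] using hkl.ne
        have h0 := hrow k.castSucc l.castSucc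
        rw [if_neg hne, Fin.sum_univ_castSucc, h1 k, h1 l] at h0
        rw [aux_off, ← hb k, ← hb l]
        linear_combination h0 - htwo
      · have hne : k.castSucc ≠ l.castSucc := by
          simpa [Fin.castSucc_inj] using hkl.ne
        have h0 := hcol k.castSucc l.castSucc
        rw [if_neg hne, Fin.sum_univ_castSucc, h2 k, h2 l] at h0
        rw [aux_off, ← hc k, ← hc l]
        linear_combination h0 - htwo
  · rintro ⟨H1, H2, H3, H4⟩
    have hbc : ∑ i, b i = ∑ j, c j := by
      simp only [hb, hc]
      exact Finset.sum_comm
    have hD : ∀ k l : Fin m, k ≠ l →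
        ∑ i : Fin m, M k.castSucc i.castSucc * M l.castSucc i.castSucc
          = (b k + 1) * (b l + 1) := by
      intro k l hkl
      rcases hkl.lt_or_gt with hlt | hlt
      · have h0 := (H4 k l hlt).1
        rw [aux_off, ← hb k, ← hb l] at h0
        linear_combination h0 - (b k * b l + b k + b l) * htwo
      · have h0 := (H4 l k hlt).1
        rw [aux_off, ← hb l, ← hb k] at h0
        have e : ∑ i : Fin m, M k.castSucc i.castSucc * M l.castSucc i.castSucc
            = ∑ i : Fin m, M l.castSucc i.castSucc * M k.castSucc i.castSucc :=
          Finset.sum_congr rfl fun i _ => mul_comm _ _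
        rw [e]
        linear_combination h0 - (b k * b l + b k + b l) * htwo
    have key : ∀ i : Fin m, ∑ t : Fin m, M i.castSucc t.castSucc * c t
        = b i * b i + (b i + 1) * ((∑ s : Fin m, (b s + 1)) - (b i + 1)) := by
      intro i
      have e1 : ∑ t : Fin m, M i.castSucc t.castSucc * c t
          = ∑ s : Fin m, ∑ t : Fin m, M i.castSucc t.castSucc * M s.castSucc t.castSucc := by
        simp only [hc, Finset.mul_sum]
        exact Finset.sum_comm
      rw [e1, ← Finset.sum_erase_add _ _ (Finset.mem_univ i)]
      have e2 : ∑ s ∈ Finset.univ.erase i, ∑ t : Fin m,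
            M i.castSucc t.castSucc * M s.castSucc t.castSucc
          = ∑ s ∈ Finset.univ.erase i, (b i + 1) * (b s + 1) :=
        Finset.sum_congr rfl fun s hs => hD i s (Ne.symm (Finset.ne_of_mem_erase hs))
      rw [e2, ← Finset.mul_sum, Finset.sum_erase_eq_sub (Finset.mem_univ i),
        ← CharTwo.sum_mul_self, ← hb i]
      ring
    have hdotlast : ∀ i : Fin m,
        ∑ t : Fin (m+1), M i.castSucc t * M (Fin.last m) t = 0 := by
      intro i
      rw [Fin.sum_univ_castSucc]
      have e : ∑ t : Fin m, M i.castSucc t.castSucc * M (Fin.last m) t.castSucc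
          = ∑ t : Fin m, M i.castSucc t.castSucc * (c t + 1) :=
        Finset.sum_congr rfl fun t _ => by rw [H2 t]
      rw [e, H1 i, H3]
      have e3 : ∑ t : Fin m, M i.castSucc t.castSucc * (c t + 1)
          = (∑ t : Fin m, M i.castSucc t.castSucc * c t) + ∑ t : Fin m, M i.castSucc t.castSucc := by
        rw [← Finset.sum_add_distrib]
        exact Finset.sum_congr rfl fun t _ => by ring
      rw [e3, key i, ← hb i]
      linear_combination ((∑ s : Fin m, (b s + 1)) * (b i + 1)) * htwo
    ext k l
    rw [Matrix.mul_apply]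
    simp only [Matrix.transpose_apply]
    induction k using Fin.lastCases with
    | last =>
      induction l using Fin.lastCases with
      | last =>
        rw [Matrix.one_apply_eq, ← CharTwo.sum_mul_self]
        have hs : ∑ t : Fin (m+1), M (Fin.last m) t = 1 := by
          rw [Fin.sum_univ_castSucc]
          have e : ∑ t : Fin m, M (Fin.last m) t.castSucc = ∑ t : Fin m, (c t + 1) :=
            Finset.sum_congr rfl fun t _ => H2 t
          have e2 : ∑ t : Fin m, (c t + 1) = ∑ t : Fin m, (b t + 1) := by
            simp only [Finset.sum_add_distrib]
            rw [hbc]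
          rw [e, e2, H3]
          linear_combination (∑ t : Fin m, (b t + 1)) * htwo
        rw [hs, one_mul]
      | cast j =>
        rw [Matrix.one_apply_ne (Fin.castSucc_lt_last j).ne']
        have e : ∑ t : Fin (m+1), M (Fin.last m) t * M j.castSucc t
            = ∑ t : Fin (m+1), M j.castSucc t * M (Fin.last m) t :=
          Finset.sum_congr rfl fun t _ => mul_comm _ _
        rw [e]
        exact hdotlast j
    | cast i =>
      induction l using Fin.lastCases with
      | last =>
        rw [Matrix.one_apply_ne (Fin.castSucc_lt_last i).ne]
        exact hdotlast i
      | cast j =>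
        by_cases hij : i = j
        · subst hij
          rw [Matrix.one_apply_eq, ← CharTwo.sum_mul_self]
          have hs : ∑ t : Fin (m+1), M i.castSucc t = 1 := by
            rw [Fin.sum_univ_castSucc, H1 i, ← hb i]
            linear_combination (b i) * htwo
          rw [hs, one_mul]
        · rw [Matrix.one_apply_ne (by simpa [Fin.castSucc_inj] using hij),
            Fin.sum_univ_castSucc, hD i j hij, H1 i, H1 j]
          exact CharTwo.add_self_eq_zero _
end

section
/- Let M = (m_ij) be a 3×3 matrix over a field of characteristic 2. Then M is orthogonal (M·Mᵀ = I) if and only if m_13 = m_11 + m_12 + 1, m_23 = m_21 + m_22 + 1, m_31 = m_11 + m_21 + 1, m_32 = m_12 + m_22 + 1, m_33 = m_11 + m_12 + m_21 + m_22 + 1, and m_11·m_22 + m_12·m_21 + m_11 + m_12 + m_21 + m_22 = 1. -/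
open Matrix

/-- Characterization of `3×3` orthogonal matrices over a field of characteristic `2`. -/
theorem stmt_12 {F : Type*} [Field F] [CharP F 2]
    (M : Matrix (Fin 3) (Fin 3) F) :
    M * Mᵀ = 1 ↔
      (M 0 2 = M 0 0 + M 0 1 + 1 ∧
       M 1 2 = M 1 0 + M 1 1 + 1 ∧
       M 2 0 = M 0 0 + M 1 0 + 1 ∧
       M 2 1 = M 0 1 + M 1 1 + 1 ∧
       M 2 2 = M 0 0 + M 0 1 + M 1 0 + M 1 1 + 1 ∧
       M 0 0 * M 1 1 + M 0 1 * M 1 0 + M 0 0 + M 0 1 + M 1 0 + M 1 1 = 1) := by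
  have h2 : (2 : F) = 0 := by exact_mod_cast CharP.cast_eq_zero F 2
  have key : ∀ x y z : F, x * x + y * y + z * z = 1 → z = x + y + 1 := by
    intro x y z hxyz
    have hsq : (z - (x + y + 1)) ^ 2 = 0 := by
      linear_combination hxyz + (1 + x*y + x + y - z*x - z*y - z) * h2
    have := pow_eq_zero_iff (two_ne_zero) |>.mp hsq
    linear_combination this
  constructor
  · intro h
    have h' : Mᵀ * M = 1 := mul_eq_one_comm.mp h
    have e00 := congrFun (congrFun h 0) 0
    have e01 := congrFun (congrFun h 0) 1
    have e11 := congrFun (congrFun h 1) 1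
    have e22 := congrFun (congrFun h 2) 2
    have f00 := congrFun (congrFun h' 0) 0
    have f11 := congrFun (congrFun h' 1) 1
    simp [Matrix.mul_apply, Fin.sum_univ_three, Matrix.one_apply,
      Matrix.transpose_apply] at e00 e01 e11 e22 f00 f11
    have p1 : M 0 2 = M 0 0 + M 0 1 + 1 := key _ _ _ e00
    have p2 : M 1 2 = M 1 0 + M 1 1 + 1 := key _ _ _ e11
    have p3 : M 2 0 = M 0 0 + M 1 0 + 1 := key _ _ _ f00
    have p4 : M 2 1 = M 0 1 + M 1 1 + 1 := key _ _ _ f11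
    have p5' : M 2 2 = M 2 0 + M 2 1 + 1 := key _ _ _ e22
    refine ⟨p1, p2, p3, p4, ?_, ?_⟩
    · rw [p5', p3, p4]; linear_combination h2
    · rw [p1, p2] at e01
      linear_combination e01 + (-(M 0 0 * M 1 0) - M 0 1 * M 1 1 - 1) * h2
  · rintro ⟨h1, h2', h3, h4, h5, h6⟩
    ext i j
    fin_cases i <;> fin_cases j <;>
      simp only [show ((⟨2, by omega⟩ : Fin 3)) = 2 from rfl, Fin.mk_zero, Fin.mk_one,
        Matrix.mul_apply, Fin.sum_univ_three, Matrix.one_apply,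
        Matrix.transpose_apply] <;>
      norm_num [Fin.ext_iff] <;>
      simp only [h1, h2', h3, h4, h5]
    · linear_combination (M 0 0 * M 0 0 + M 0 1 * M 0 1 + M 0 0 * M 0 1 + M 0 0 + M 0 1) * h2
    · linear_combination h6 + (M 0 0 * M 1 0 + M 0 1 * M 1 1 + 1) * h2
    · linear_combination h6 + (M 0 0 * M 0 0 + M 0 0 * M 1 0 + M 0 0 + M 0 1 * M 0 1 +
        M 0 1 * M 1 1 + M 0 1 + M 0 0 * M 0 1 + 1) * h2
    · linear_combination h6 + (M 0 0 * M 1 0 + M 0 1 * M 1 1 + 1) * h2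
    · linear_combination (M 1 0 * M 1 0 + M 1 1 * M 1 1 + M 1 0 * M 1 1 + M 1 0 + M 1 1) * h2
    · linear_combination h6 + (M 0 0 * M 1 0 + M 1 0 * M 1 0 + M 1 0 + M 0 1 * M 1 1 +
        M 1 1 * M 1 1 + M 1 1 + M 1 0 * M 1 1 + 1) * h2
    · linear_combination h6 + (M 0 0 * M 0 0 + M 0 0 * M 1 0 + M 0 0 + M 0 1 * M 0 1 +
        M 0 1 * M 1 1 + M 0 1 + M 0 0 * M 0 1 + 1) * h2
    · linear_combination h6 + (M 0 0 * M 1 0 + M 1 0 * M 1 0 + M 1 0 + M 0 1 * M 1 1 +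
        M 1 1 * M 1 1 + M 1 1 + M 1 0 * M 1 1 + 1) * h2
    · linear_combination (M 0 0 * M 0 0 + 2*(M 0 0 * M 1 0) + 2*(M 0 0) + M 1 0 * M 1 0 +
        2*(M 1 0) + 1 + M 0 1 * M 0 1 + 2*(M 0 1 * M 1 1) + 2*(M 0 1) + M 1 1 * M 1 1 +
        2*(M 1 1) + M 0 0 * M 0 1 + M 0 0 * M 1 1 + M 0 1 * M 1 0 + M 1 0 * M 1 1) * h2
end

section
/- Let M be a 3×3 orthogonal matrix over a finite field of characteristic 2. Then M is MDS if and only if all nine entries of M are nonzero. -/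
/-!
The cofactor matrix of an orthogonal matrix `M` is `det M • M`, and the `2×2` minors of a `3×3`
matrix are, up to sign, its cofactors. Hence every `2×2` minor of `M` is a unit multiple of an
entry of `M`, while the `1×1` minors are the entries themselves and the `3×3` minor is the unit
`det M`.
-/

open Matrix Equiv

theorem Fin.exists_perm_eq_succAbove_comp {n : ℕ} {r : Fin n → Fin (n + 1)} (hr : r.Injective) :
    ∃ (j : Fin (n + 1)) (σ : Perm (Fin n)), r = j.succAbove ∘ σ := by
  obtain ⟨j, hj⟩ : ∃ j, j ∉ Set.range r := by
    by_contra! h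
    have := Fintype.card_le_of_surjective r fun j => h j
    simp at this
  choose g hg using fun x => Fin.exists_succAbove_eq (x := r x) (y := j) fun e => hj ⟨x, e⟩
  have hg_inj : g.Injective := fun x y hxy => hr (by rw [← hg x, ← hg y, hxy])
  exact ⟨j, .ofBijective g hg_inj.bijective_of_finite, funext fun x => (hg x).symm⟩

namespace Matrix

variable {R : Type*} [CommRing R]

theorem adjugate_eq_det_smul_transpose_of_mul_transpose_eq_one {n : Type*} [Fintype n]
    [DecidableEq n] {M : Matrix n n R} (h : M * Mᵀ = 1) : adjugate M = M.det • Mᵀ :=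
  calc adjugate M = (Mᵀ * M) * adjugate M := by rw [mul_eq_one_comm.mp h, Matrix.one_mul]
    _ = M.det • Mᵀ := by rw [Matrix.mul_assoc, mul_adjugate, Matrix.mul_smul, Matrix.mul_one]

theorem associated_det_submatrix_perm {n : Type*} [Fintype n] [DecidableEq n]
    (A : Matrix n n R) (σ τ : Perm n) : Associated (A.submatrix σ τ).det A.det := by
  have hsign (π : Perm n) : IsUnit (Perm.sign π : R) :=
    (Perm.sign π).isUnit.map (Int.castRingHom R)
  rw [show A.submatrix σ τ = (A.submatrix id τ).submatrix σ id from rfl, det_permute,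
    det_permute', ← mul_assoc]
  exact associated_unit_mul_left _ _ ((hsign σ).mul (hsign τ))

theorem associated_det_submatrix_of_injective {n : Type*} [Fintype n] [DecidableEq n]
    (A : Matrix n n R) {r c : n → n} (hr : r.Injective) (hc : c.Injective) :
    Associated (A.submatrix r c).det A.det :=
  A.associated_det_submatrix_perm (.ofBijective r hr.bijective_of_finite)
    (.ofBijective c hc.bijective_of_finite)

theorem exists_associated_det_submatrix_adjugate {n : ℕ}
    (A : Matrix (Fin (n + 1)) (Fin (n + 1)) R) {r c : Fin n → Fin (n + 1)} (hr : r.Injective)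
    (hc : c.Injective) : ∃ i j, Associated (A.submatrix r c).det (adjugate A i j) := by
  obtain ⟨j, σ, rfl⟩ := Fin.exists_perm_eq_succAbove_comp hr
  obtain ⟨i, τ, rfl⟩ := Fin.exists_perm_eq_succAbove_comp hc
  refine ⟨i, j, ?_⟩
  rw [adjugate_fin_succ_eq_det_submatrix, ← submatrix_submatrix]
  exact (associated_det_submatrix_perm _ σ τ).trans
    (associated_unit_mul_right _ _ ((isUnit_neg_one (α := R)).pow _))

end Matrix

theorem stmt_13_general {F : Type*} [Field F]
    (M : Matrix (Fin 3) (Fin 3) F) (horth : M * Mᵀ = 1) :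
    (∀ (k : ℕ) (r c : Fin k → Fin 3), Function.Injective r → Function.Injective c →
        (M.submatrix r c).det ≠ 0) ↔
      (∀ i j, M i j ≠ 0) := by
  have hdet : M.det ≠ 0 := (isUnit_det_of_right_inverse horth).ne_zero
  refine ⟨fun h i j => ?_, fun h k r c hr hc => ?_⟩
  · have h11 := h 1 ![i] ![j] (Function.injective_of_subsingleton _)
      (Function.injective_of_subsingleton _)
    rwa [det_fin_one] at h11
  have hk : k ≤ 3 := by simpa using Fintype.card_le_of_injective r hr
  interval_cases k
  · simp
  · simpa using h (r 0) (c 0)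
  · obtain ⟨i, j, hminor⟩ := M.exists_associated_det_submatrix_adjugate (n := 2) hr hc
    rw [hminor.ne_zero_iff, adjugate_eq_det_smul_transpose_of_mul_transpose_eq_one horth]
    exact mul_ne_zero hdet (h j i)
  · rwa [(M.associated_det_submatrix_of_injective hr hc).ne_zero_iff]

/-- A `3×3` orthogonal matrix over a finite field of characteristic `2` is MDS iff all
of its entries are nonzero. -/
theorem stmt_13 {F : Type*} [Field F] [Fintype F] [CharP F 2]
    (M : Matrix (Fin 3) (Fin 3) F) (horth : M * Mᵀ = 1) :
    (∀ (k : ℕ) (r c : Fin k → Fin 3), Function.Injective r → Function.Injective c →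
        (M.submatrix r c).det ≠ 0) ↔
      (∀ i j, M i j ≠ 0) :=
  stmt_13_general M horth
end

section
/- For m ≥ 3, the number of 3×3 orthogonal MDS matrices over the finite field F_{2^m} equals (2^m − 2)(2^m − 3)(2^m − 4). -/
open Matrix Finset

set_option linter.unusedSectionVars false

namespace Stmt14

variable {F : Type*} [Field F] [Fintype F] [DecidableEq F] [CharP F 2]

def Cond (a b c d : F) : Prop :=
  a*d + b*c + a + b + c + d = 1 ∧ a ≠ 0 ∧ b ≠ 0 ∧ c ≠ 0 ∧ d ≠ 0 ∧
  a + b ≠ 1 ∧ c + d ≠ 1 ∧ a + c ≠ 1 ∧ b + d ≠ 1 ∧ a + b + c + d ≠ 1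

lemma card_compl (s : Finset F) : Nat.card {x : F // x ∉ s} = Fintype.card F - s.card := by
  classical
  rw [Nat.card_eq_fintype_card, Fintype.card_subtype]
  have h : (univ.filter fun x => x ∉ s) = univ \ s := by ext x; simp
  rw [h, Finset.card_sdiff_of_subset (Finset.subset_univ s), Finset.card_univ]

lemma bad4_card (b : F) (hb0 : b ≠ 0) (hb1 : b ≠ 1) :
    ({0, (b+1)⁻¹, b+1, b^2/(b+1)} : Finset F).card = 4 := by
  have h2 : (2:F) = 0 := CharTwo.two_eq_zero
  have hv : b + 1 ≠ 0 := by intro h; apply hb1; linear_combination h - h2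
  have d12 : (0:F) ≠ (b+1)⁻¹ := (inv_ne_zero hv).symm
  have d13 : (0:F) ≠ b+1 := fun h => hv h.symm
  have d14 : (0:F) ≠ b^2/(b+1) := (div_ne_zero (pow_ne_zero 2 hb0) hv).symm
  have d23 : (b+1)⁻¹ ≠ b+1 := by
    intro h; field_simp at h
    have : b*b = 0 := by linear_combination -h - b*h2
    exact hb0 (mul_self_eq_zero.mp this)
  have d24 : (b+1)⁻¹ ≠ b^2/(b+1) := by
    intro h; field_simp at h
    have : (b+1)*(b+1) = 0 := by linear_combination -h + (b+1)*h2
    exact hv (mul_self_eq_zero.mp this)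
  have d34 : b+1 ≠ b^2/(b+1) := by
    intro h; rw [eq_div_iff hv] at h
    have : (1:F) = 0 := by linear_combination h - b*h2
    exact one_ne_zero this
  rw [Finset.card_insert_of_notMem (by simp [d12, d13, d14]),
      Finset.card_insert_of_notMem (by simp [d23, d24]),
      Finset.card_insert_of_notMem (by simp [d34])]
  simp


lemma bad6_card (a b : F) (ha0 : a ≠ 0) (ha1 : a ≠ 1) (hb0 : b ≠ 0) (hb1 : b ≠ 1)
    (hab : a ≠ b) (hab1 : a + b ≠ 1) :
    ({0, (a+b+1)/(b+1), b/(a+b), a+1, a*b/(b+1), a*(a+b+1)/(a+b)} : Finset F).card = 6 := by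
  have h2 : (2:F) = 0 := CharTwo.two_eq_zero
  have hu : a + 1 ≠ 0 := by intro h; apply ha1; linear_combination h - h2
  have hv : b + 1 ≠ 0 := by intro h; apply hb1; linear_combination h - h2
  have hs : a + b ≠ 0 := by intro h; apply hab; linear_combination h - b*h2
  have ht : a + b + 1 ≠ 0 := by intro h; apply hab1; linear_combination h - h2
  have d12 : (0:F) ≠ (a+b+1)/(b+1) := (div_ne_zero ht hv).symm
  have d13 : (0:F) ≠ b/(a+b) := (div_ne_zero hb0 hs).symm
  have d14 : (0:F) ≠ a+1 := fun h => hu h.symm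
  have d15 : (0:F) ≠ a*b/(b+1) := (div_ne_zero (mul_ne_zero ha0 hb0) hv).symm
  have d16 : (0:F) ≠ a*(a+b+1)/(a+b) := (div_ne_zero (mul_ne_zero ha0 ht) hs).symm
  have d23 : (a+b+1)/(b+1) ≠ b/(a+b) := by
    intro h; rw [div_eq_div_iff hv hs] at h
    exact mul_ne_zero ha0 hu (by linear_combination h - a*b*h2)
  have d24 : (a+b+1)/(b+1) ≠ a+1 := by
    intro h; rw [div_eq_iff hv] at h
    exact mul_ne_zero ha0 hb0 (by linear_combination -h)
  have d25 : (a+b+1)/(b+1) ≠ a*b/(b+1) := by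
    intro h; rw [div_eq_div_iff hv hv] at h
    exact mul_ne_zero hv (mul_ne_zero hu hv) (by linear_combination h + a*b*(b+1)*h2)
  have d26 : (a+b+1)/(b+1) ≠ a*(a+b+1)/(a+b) := by
    intro h; rw [div_eq_div_iff hv hs] at h
    exact mul_ne_zero (mul_ne_zero ht hb0) hu (by linear_combination h + a*b*(a+b+1)*h2)
  have d34 : b/(a+b) ≠ a+1 := by
    intro h; rw [div_eq_iff hs] at h
    exact mul_ne_zero ha0 ht (by linear_combination -h)
  have d35 : b/(a+b) ≠ a*b/(b+1) := by
    intro h; rw [div_eq_div_iff hs hv] at h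
    exact mul_ne_zero hb0 (mul_ne_zero hu ht) (by linear_combination h + (a^2*b + a*b^2 + a*b)*h2)
  have d36 : b/(a+b) ≠ a*(a+b+1)/(a+b) := by
    intro h; rw [div_eq_div_iff hs hs] at h
    exact mul_ne_zero (mul_ne_zero hs hs) hu (by linear_combination -h + (a*b+b^2)*h2)
  have d45 : (a+1:F) ≠ a*b/(b+1) := by
    intro h; rw [eq_div_iff hv] at h
    exact ht (by linear_combination h)
  have d46 : (a+1:F) ≠ a*(a+b+1)/(a+b) := by
    intro h; rw [eq_div_iff hs] at h
    exact hb0 (by linear_combination h)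
  have d56 : a*b/(b+1) ≠ a*(a+b+1)/(a+b) := by
    intro h; rw [div_eq_div_iff hv hs] at h
    exact mul_ne_zero ha0 hu (by linear_combination -h - a*b*h2)
  rw [Finset.card_insert_of_notMem (by simp [d12, d13, d14, d15, d16]),
      Finset.card_insert_of_notMem (by simp [d23, d24, d25, d26]),
      Finset.card_insert_of_notMem (by simp [d34, d35, d36]),
      Finset.card_insert_of_notMem (by simp [d45, d46]),
      Finset.card_insert_of_notMem (by simp [d56])]
  simp


lemma fiber_zero (a b : F) (h : a = 0 ∨ b = 0 ∨ a + b = 1 ∨ (a = 1 ∧ b = 1)) :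
    Nat.card {cd : F × F // Cond a b cd.1 cd.2} = 0 := by
  have h2 : (2:F) = 0 := CharTwo.two_eq_zero
  have : IsEmpty {cd : F × F // Cond a b cd.1 cd.2} := by
    refine ⟨fun p => ?_⟩
    obtain ⟨⟨c, d⟩, hq, h1', h2', _, _, h5, _, _, _, _⟩ := p
    rcases h with h | h | h | ⟨ha, hb⟩
    · exact h1' h
    · exact h2' h
    · exact h5 h
    · subst ha hb
      exact one_ne_zero (by linear_combination (c+d+1)*h2 - hq)
  simp [Nat.card_eq_fintype_card]


lemma fiber_a1 (b : F) (hb0 : b ≠ 0) (hb1 : b ≠ 1) :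
    Nat.card {cd : F × F // Cond 1 b cd.1 cd.2} = Fintype.card F - 4 := by
  have h2 : (2:F) = 0 := CharTwo.two_eq_zero
  have hv : b + 1 ≠ 0 := by intro h; apply hb1; linear_combination h - h2
  set bad : Finset F := {0, (b+1)⁻¹, b+1, b^2/(b+1)} with hbad
  have hc0 : (b/(b+1)) * (b+1) = b := div_mul_cancel₀ b hv
  have e : {cd : F × F // Cond 1 b cd.1 cd.2} ≃ {x : F // x ∉ bad} := by
    refine ⟨fun p => ⟨p.1.2, ?_⟩, fun x => ⟨(b/(b+1), x.1), ?_⟩, ?_, ?_⟩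
    · obtain ⟨⟨c, d⟩, hq, _, _, hc, hd, h5, h6, h7, h8, h9⟩ := p
      simp only [hbad, Finset.mem_insert, Finset.mem_singleton, not_or]
      have hq' : c*(b+1) = b := by linear_combination hq - (b+d)*h2
      refine ⟨hd, ?_, ?_, ?_⟩
      · intro h
        apply h6
        have h' : d*(b+1) = 1 := by rw [h]; exact inv_mul_cancel₀ hv
        have key : (c+d)*(b+1) = 1*(b+1) := by linear_combination hq' + h'
        exact mul_right_cancel₀ hv key
      · intro h
        apply h8
        rw [h]; linear_combination b*h2
      · intro h
        apply h9
        have h' : d*(b+1) = b^2 := by rw [h]; exact div_mul_cancel₀ _ hv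
        have key : (1+b+c+d)*(b+1) = 1*(b+1) := by linear_combination hq' + h' + (b^2+b)*h2
        have := mul_right_cancel₀ hv key
        linear_combination this
    · obtain ⟨x, hx⟩ := x
      simp only [hbad, Finset.mem_insert, Finset.mem_singleton, not_or] at hx
      obtain ⟨f1, f2, f3, f4⟩ := hx
      refine ⟨?_, one_ne_zero, hb0, div_ne_zero hb0 hv, f1, ?_, ?_, ?_, ?_, ?_⟩
      · linear_combination hc0 + (x+b)*h2
      · intro h; apply hb0; linear_combination h
      · intro h
        apply f2
        have : x*(b+1) = 1 := by linear_combination (b+1)*h - hc0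
        field_simp
        linear_combination this
      · intro h; apply div_ne_zero hb0 hv; linear_combination h
      · intro h; apply f3; linear_combination h - b*h2
      · intro h
        apply f4
        rw [eq_div_iff hv]
        linear_combination (b+1)*h - hc0 - (b^2+b)*h2
    · rintro ⟨⟨c, d⟩, hq, _, _, hc, hd, h5, h6, h7, h8, h9⟩
      have hq' : c*(b+1) = b := by linear_combination hq - (b+d)*h2
      apply Subtype.ext
      simp only [Prod.mk.injEq]
      exact ⟨by rw [div_eq_iff hv]; linear_combination -hq', trivial⟩
    · intro x; rfl
  rw [Nat.card_congr e, card_compl, hbad, bad4_card b hb0 hb1]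


lemma fiber_b1 (a : F) (ha0 : a ≠ 0) (ha1 : a ≠ 1) :
    Nat.card {cd : F × F // Cond a 1 cd.1 cd.2} = Fintype.card F - 4 := by
  have h2 : (2:F) = 0 := CharTwo.two_eq_zero
  have hu : a + 1 ≠ 0 := by intro h; apply ha1; linear_combination h - h2
  set bad : Finset F := {0, (a+1)⁻¹, a+1, a^2/(a+1)} with hbad
  have hd0m : (a/(a+1)) * (a+1) = a := div_mul_cancel₀ a hu
  have e : {cd : F × F // Cond a 1 cd.1 cd.2} ≃ {x : F // x ∉ bad} := by
    refine ⟨fun p => ⟨p.1.1, ?_⟩, fun x => ⟨(x.1, a/(a+1)), ?_⟩, ?_, ?_⟩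
    · obtain ⟨⟨c, d⟩, hq, _, _, hc, hd, h5, h6, h7, h8, h9⟩ := p
      simp only [hbad, Finset.mem_insert, Finset.mem_singleton, not_or]
      have hq' : d*(a+1) = a := by linear_combination hq - (a+c)*h2
      refine ⟨hc, ?_, ?_, ?_⟩
      · intro h
        apply h6
        have h' : c*(a+1) = 1 := by rw [h]; exact inv_mul_cancel₀ hu
        have key : (c+d)*(a+1) = 1*(a+1) := by linear_combination hq' + h'
        exact mul_right_cancel₀ hu key
      · intro h; apply h7; rw [h]; linear_combination a*h2
      · intro h
        apply h9
        have h' : c*(a+1) = a^2 := by rw [h]; exact div_mul_cancel₀ _ hu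
        have key : (a+1+c+d)*(a+1) = 1*(a+1) := by
          linear_combination hq' + h' + (a^2+a)*h2
        exact mul_right_cancel₀ hu key
    · obtain ⟨x, hx⟩ := x
      simp only [hbad, Finset.mem_insert, Finset.mem_singleton, not_or] at hx
      obtain ⟨f1, f2, f3, f4⟩ := hx
      refine ⟨?_, ha0, one_ne_zero, f1, div_ne_zero ha0 hu, ?_, ?_, ?_, ?_, ?_⟩
      · linear_combination hd0m + (a+x)*h2
      · intro h; apply ha0; linear_combination h
      · intro h
        apply f2
        have hx1 : x*(a+1) = 1 := by linear_combination (a+1)*h - hd0m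
        field_simp
        linear_combination hx1
      · intro h; apply f3; linear_combination h - a*h2
      · intro h; apply div_ne_zero ha0 hu; linear_combination h
      · intro h
        apply f4
        rw [eq_div_iff hu]
        linear_combination (a+1)*h - hd0m - (a^2+a)*h2
    · rintro ⟨⟨c, d⟩, hq, _, _, hc, hd, h5, h6, h7, h8, h9⟩
      have hq' : d*(a+1) = a := by linear_combination hq - (a+c)*h2
      apply Subtype.ext
      simp only [Prod.mk.injEq]
      exact ⟨trivial, by rw [div_eq_iff hu]; linear_combination -hq'⟩
    · intro x; rfl
  rw [Nat.card_congr e, card_compl, hbad, bad4_card a ha0 ha1]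

lemma fiber_diag (a : F) (ha0 : a ≠ 0) (ha1 : a ≠ 1) :
    Nat.card {cd : F × F // Cond a a cd.1 cd.2} = Fintype.card F - 4 := by
  have h2 : (2:F) = 0 := CharTwo.two_eq_zero
  have hu : a + 1 ≠ 0 := by intro h; apply ha1; linear_combination h - h2
  set bad : Finset F := {0, (a+1)⁻¹, a+1, a^2/(a+1)} with hbad
  have hi : (a+1)⁻¹ * (a+1) = 1 := inv_mul_cancel₀ hu
  have e : {cd : F × F // Cond a a cd.1 cd.2} ≃ {x : F // x ∉ bad} := by
    refine ⟨fun p => ⟨p.1.1, ?_⟩, fun x => ⟨(x.1, x.1 + (a+1)⁻¹), ?_⟩, ?_, ?_⟩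
    · obtain ⟨⟨c, d⟩, hq, _, _, hc, hd, h5, h6, h7, h8, h9⟩ := p
      simp only [hbad, Finset.mem_insert, Finset.mem_singleton, not_or]
      have hq' : (c+d)*(a+1) = 1 := by linear_combination hq - a*h2
      refine ⟨hc, ?_, ?_, ?_⟩
      · intro h
        apply hd
        have h' : c*(a+1) = 1 := by rw [h]; exact inv_mul_cancel₀ hu
        have : d*(a+1) = 0 := by linear_combination hq' - h'
        exact (mul_eq_zero.mp this).resolve_right hu
      · intro h; apply h7; rw [h]; linear_combination a*h2
      · intro h
        apply h8
        have h' : c*(a+1) = a^2 := by rw [h]; exact div_mul_cancel₀ _ hu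
        have key : (a+d)*(a+1) = 1*(a+1) := by linear_combination hq' - h'
        exact mul_right_cancel₀ hu key
    · obtain ⟨x, hx⟩ := x
      simp only [hbad, Finset.mem_insert, Finset.mem_singleton, not_or] at hx
      obtain ⟨f1, f2, f3, f4⟩ := hx
      refine ⟨?_, ha0, ha0, f1, ?_, ?_, ?_, ?_, ?_, ?_⟩
      · linear_combination hi + (a*x+x+a)*h2
      · intro h; apply f2; linear_combination h - (a+1)⁻¹*h2
      · intro h; exact one_ne_zero (by linear_combination a*h2 - h)
      · intro h; apply ha0; linear_combination -(a+1)*h + hi + (x*a+x)*h2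
      · intro h; apply f3; linear_combination h - a*h2
      · intro h
        apply f4
        rw [eq_div_iff hu]
        linear_combination (a+1)*h - hi - a^2*h2
      · intro h; apply ha0; linear_combination -(a+1)*h + hi + ((a+x)*(a+1))*h2
    · rintro ⟨⟨c, d⟩, hq, _, _, hc, hd, h5, h6, h7, h8, h9⟩
      have hq' : (c+d)*(a+1) = 1 := by linear_combination hq - a*h2
      apply Subtype.ext
      simp only [Prod.mk.injEq]
      refine ⟨trivial, ?_⟩
      have key : (c + (a+1)⁻¹)*(a+1) = d*(a+1) := by
        linear_combination hq' + hi + (1 - d*(a+1))*h2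
      exact mul_right_cancel₀ hu key
    · intro x; rfl
  rw [Nat.card_congr e, card_compl, hbad, bad4_card a ha0 ha1]


lemma fiber_gen (a b : F) (ha0 : a ≠ 0) (ha1 : a ≠ 1) (hb0 : b ≠ 0) (hb1 : b ≠ 1)
    (hab : a ≠ b) (hab1 : a + b ≠ 1) :
    Nat.card {cd : F × F // Cond a b cd.1 cd.2} = Fintype.card F - 6 := by
  have h2 : (2:F) = 0 := CharTwo.two_eq_zero
  have hu : a + 1 ≠ 0 := by intro h; apply ha1; linear_combination h - h2
  have hv : b + 1 ≠ 0 := by intro h; apply hb1; linear_combination h - h2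
  have hs : a + b ≠ 0 := by intro h; apply hab; linear_combination h - b*h2
  have ht : a + b + 1 ≠ 0 := by intro h; apply hab1; linear_combination h - h2
  set bad : Finset F :=
    {0, (a+b+1)/(b+1), b/(a+b), a+1, a*b/(b+1), a*(a+b+1)/(a+b)} with hbad
  have e : {cd : F × F // Cond a b cd.1 cd.2} ≃ {x : F // x ∉ bad} := by
    refine ⟨fun p => ⟨p.1.1, ?_⟩,
      fun x => ⟨(x.1, (a+b+1 + x.1*(b+1))/(a+1)), ?_⟩, ?_, ?_⟩
    · obtain ⟨⟨c, d⟩, hq, _, _, hc, hd, h5, h6, h7, h8, h9⟩ := p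
      simp only [hbad, Finset.mem_insert, Finset.mem_singleton, not_or]
      have hq' : d*(a+1) + c*(b+1) = a+b+1 := by linear_combination hq - (a+b)*h2
      refine ⟨hc, ?_, ?_, ?_, ?_, ?_⟩
      · intro h
        apply hd
        rw [eq_div_iff hv] at h
        have : d*(a+1) = 0 := by linear_combination hq' - h
        exact (mul_eq_zero.mp this).resolve_right hu
      · intro h
        apply h6
        rw [eq_div_iff hs] at h
        have key : (c+d)*(a+1) = 1*(a+1) := by
          linear_combination hq' + h + (b - c*b)*h2
        exact mul_right_cancel₀ hu key
      · intro h; apply h7; rw [h]; linear_combination a*h2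
      · intro h
        apply h8
        rw [eq_div_iff hv] at h
        have key : (b+d)*(a+1) = 1*(a+1) := by
          linear_combination hq' + h + (b + a*b - b*c - c)*h2
        exact mul_right_cancel₀ hu key
      · intro h
        apply h9
        rw [eq_div_iff hs] at h
        have key : (a+b+c+d)*(a+1) = 1*(a+1) := by
          linear_combination hq' + h + (a^2+a*b+a+b-b*c)*h2
        exact mul_right_cancel₀ hu key
    · obtain ⟨x, hx⟩ := x
      dsimp only
      simp only [hbad, Finset.mem_insert, Finset.mem_singleton, not_or] at hx
      obtain ⟨f1, f2, f3, f4, f5, f6⟩ := hx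
      have hd : ((a+b+1 + x*(b+1))/(a+1))*(a+1) = a+b+1 + x*(b+1) :=
        div_mul_cancel₀ _ hu
      refine ⟨?_, ha0, hb0, f1, ?_, hab1, ?_, ?_, ?_, ?_⟩
      · linear_combination hd + (b*x+a+b+x)*h2
      · intro h
        apply f2
        rw [eq_div_iff hv]
        rw [h] at hd
        linear_combination -hd - (a+b+1)*h2
      · intro h
        apply f3
        rw [eq_div_iff hs]
        linear_combination (a+1)*h - hd - (b+x)*h2
      · intro h; apply f4; linear_combination h - a*h2
      · intro h
        apply f5
        rw [eq_div_iff hv]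
        linear_combination (a+1)*h - hd - (a*b+b)*h2
      · intro h
        apply f6
        rw [eq_div_iff hs]
        linear_combination (a+1)*h - hd - (x+a^2+a*b+a+b)*h2
    · rintro ⟨⟨c, d⟩, hq, _, _, hc, hd, h5, h6, h7, h8, h9⟩
      have hq' : d*(a+1) + c*(b+1) = a+b+1 := by linear_combination hq - (a+b)*h2
      apply Subtype.ext
      simp only [Prod.mk.injEq]
      refine ⟨trivial, ?_⟩
      rw [div_eq_iff hu]
      linear_combination -hq' + (b*c+c)*h2
    · intro x; rfl
  rw [Nat.card_congr e, card_compl, hbad, bad6_card a b ha0 ha1 hb0 hb1 hab hab1]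


lemma sum4 (x1 x2 x3 x4 : F) (h12 : x1 ≠ x2) (h13 : x1 ≠ x3) (h14 : x1 ≠ x4)
    (h23 : x2 ≠ x3) (h24 : x2 ≠ x4) (h34 : x3 ≠ x4) (f : F → ℕ) :
    ∑ x : F, f x = (∑ x ∈ (univ \ {x1, x2, x3, x4} : Finset F), f x)
      + (f x1 + f x2 + f x3 + f x4) := by
  rw [← Finset.sum_sdiff (Finset.subset_univ {x1, x2, x3, x4})]
  congr 1
  rw [Finset.sum_insert (by simp [h12, h13, h14]),
      Finset.sum_insert (by simp [h23, h24]),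
      Finset.sum_insert (by simp [h34]), Finset.sum_singleton]
  ring

lemma sum2 (x1 x2 : F) (h12 : x1 ≠ x2) (f : F → ℕ) :
    ∑ x : F, f x = (∑ x ∈ (univ \ {x1, x2} : Finset F), f x) + (f x1 + f x2) := by
  rw [← Finset.sum_sdiff (Finset.subset_univ {x1, x2})]
  congr 1
  rw [Finset.sum_insert (by simp [h12]), Finset.sum_singleton]

lemma nat_card_sigma {ι : Type*} [Fintype ι] (G : ι → Type*) [∀ i, Fintype (G i)] :
    Nat.card ((i : ι) × G i) = ∑ i, Nat.card (G i) := by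
  simp [Nat.card_eq_fintype_card, Fintype.card_sigma]

lemma count_params (hq8 : 8 ≤ Fintype.card F) :
    Nat.card {p : F × F × F × F // Cond p.1 p.2.1 p.2.2.1 p.2.2.2} =
      (Fintype.card F - 2) * (Fintype.card F - 3) * (Fintype.card F - 4) := by
  classical
  have h2 : (2:F) = 0 := CharTwo.two_eq_zero
  set q := Fintype.card F with hqdef
  have e : {p : F × F × F × F // Cond p.1 p.2.1 p.2.2.1 p.2.2.2} ≃
      (a : F) × (b : F) × {cd : F × F // Cond a b cd.1 cd.2} :=
    ⟨fun p => ⟨p.1.1, p.1.2.1, ⟨p.1.2.2, p.2⟩⟩,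
     fun x => ⟨(x.1, x.2.1, x.2.2.1), x.2.2.2⟩,
     fun p => rfl, fun x => rfl⟩
  rw [Nat.card_congr e, nat_card_sigma]
  have expand : ∀ a : F, Nat.card ((b : F) × {cd : F × F // Cond a b cd.1 cd.2})
      = ∑ b : F, Nat.card {cd : F × F // Cond a b cd.1 cd.2} := fun a => nat_card_sigma _
  simp only [expand]
  have inner : ∀ a : F, a ≠ 0 → a ≠ 1 →
      ∑ b : F, Nat.card {cd : F × F // Cond a b cd.1 cd.2}
        = (q - 4) * (q - 6) + 2 * (q - 4) := by
    intro a ha0 ha1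
    have hu : a + 1 ≠ 0 := by intro h; apply ha1; linear_combination h - h2
    have d12 : (0:F) ≠ 1 := zero_ne_one
    have d13 : (0:F) ≠ a := Ne.symm ha0
    have d14 : (0:F) ≠ a+1 := fun h => hu h.symm
    have d23 : (1:F) ≠ a := Ne.symm ha1
    have d24 : (1:F) ≠ a+1 := fun h => ha0 (by linear_combination -h)
    have d34 : a ≠ a+1 := fun h => one_ne_zero (by linear_combination -h)
    rw [sum4 0 1 a (a+1) d12 d13 d14 d23 d24 d34]
    rw [fiber_zero a 0 (Or.inr (Or.inl rfl)),
        fiber_b1 a ha0 ha1, fiber_diag a ha0 ha1,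
        fiber_zero a (a+1) (Or.inr (Or.inr (Or.inl (by linear_combination a*h2))))]
    have hsum : ∀ b ∈ (univ \ {0, 1, a, a+1} : Finset F),
        Nat.card {cd : F × F // Cond a b cd.1 cd.2} = q - 6 := by
      intro b hb
      simp only [Finset.mem_sdiff, Finset.mem_insert, Finset.mem_singleton, not_or,
        Finset.mem_univ, true_and] at hb
      obtain ⟨hb0, hb1, hba, hba1⟩ := hb
      exact fiber_gen a b ha0 ha1 hb0 hb1 (Ne.symm hba)
        (fun h => hba1 (by linear_combination h - a*h2))
    rw [Finset.sum_congr rfl hsum, Finset.sum_const, Finset.card_sdiff_of_subset (Finset.subset_univ _)]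
    rw [Finset.card_insert_of_notMem (by simp [d12, d13, d14]),
        Finset.card_insert_of_notMem (by simp [d23, d24]),
        Finset.card_insert_of_notMem (by simp [d34]), Finset.card_singleton]
    rw [Finset.card_univ, ← hqdef]
    simp only [smul_eq_mul]
    norm_num
    omega
  have inner1 : ∑ b : F, Nat.card {cd : F × F // Cond 1 b cd.1 cd.2} = (q-2)*(q-4) := by
    rw [sum2 0 1 zero_ne_one]
    rw [fiber_zero 1 0 (Or.inr (Or.inl rfl)), fiber_zero 1 1 (Or.inr (Or.inr (Or.inr ⟨rfl, rfl⟩)))]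
    have hsum : ∀ b ∈ (univ \ {0, 1} : Finset F),
        Nat.card {cd : F × F // Cond 1 b cd.1 cd.2} = q - 4 := by
      intro b hb
      simp only [Finset.mem_sdiff, Finset.mem_insert, Finset.mem_singleton, not_or,
        Finset.mem_univ, true_and] at hb
      exact fiber_a1 b hb.1 hb.2
    rw [Finset.sum_congr rfl hsum, Finset.sum_const, Finset.card_sdiff_of_subset (Finset.subset_univ _)]
    rw [Finset.card_insert_of_notMem (by simp), Finset.card_singleton, Finset.card_univ, ← hqdef]
    simp only [smul_eq_mul]
    norm_num
  rw [sum2 0 1 zero_ne_one]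
  have hz : ∑ b : F, Nat.card {cd : F × F // Cond 0 b cd.1 cd.2} = 0 :=
    Finset.sum_eq_zero (fun b _ => fiber_zero 0 b (Or.inl rfl))
  rw [hz, inner1]
  have hsum : ∀ a ∈ (univ \ {0, 1} : Finset F),
      (∑ b : F, Nat.card {cd : F × F // Cond a b cd.1 cd.2})
        = (q - 4) * (q - 6) + 2 * (q - 4) := by
    intro a ha
    simp only [Finset.mem_sdiff, Finset.mem_insert, Finset.mem_singleton, not_or,
      Finset.mem_univ, true_and] at ha
    exact inner a ha.1 ha.2
  rw [Finset.sum_congr rfl hsum, Finset.sum_const, Finset.card_sdiff_of_subset (Finset.subset_univ _)]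
  rw [Finset.card_insert_of_notMem (by simp), Finset.card_singleton, Finset.card_univ, ← hqdef]
  simp only [smul_eq_mul]
  clear_value q
  obtain ⟨t, ht⟩ : ∃ t, q = t + 8 := ⟨q - 8, by omega⟩
  subst ht
  rw [show t+8-2 = t+6 from rfl, show t+8-3 = t+5 from rfl, show t+8-4 = t+4 from rfl,
      show t+8-6 = t+2 from rfl]
  ring


def mat (a b c d : F) : Matrix (Fin 3) (Fin 3) F :=
  !![a, b, a+b+1; c, d, c+d+1; a+c+1, b+d+1, a+b+c+d+1]

lemma mat_transpose (a b c d : F) :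
    (mat a b c d)ᵀ = !![a, c, a+c+1; b, d, b+d+1; a+b+1, c+d+1, a+b+c+d+1] := by
  ext i j
  fin_cases i <;> fin_cases j <;> rfl

lemma mat_orth {a b c d : F} (h : Cond a b c d) : mat a b c d * (mat a b c d)ᵀ = 1 := by
  have h2 : (2:F) = 0 := CharTwo.two_eq_zero
  obtain ⟨hq, -, -, -, -, -, -, -, -, -⟩ := h
  rw [mat_transpose, mat, Matrix.mul_fin_three, Matrix.one_fin_three]
  ext i j
  fin_cases i <;> fin_cases j <;> simp [Matrix.vecHead, Matrix.vecTail] <;>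
    first
      | linear_combination (a^2+b^2+a*b+a+b)*h2
      | linear_combination (c^2+d^2+c*d+c+d)*h2
      | linear_combination hq + (a*c+b*d+1)*h2
      | linear_combination hq + (a^2+b^2+a*b+a*c+b*d+a+b+1)*h2
      | linear_combination hq + (c^2+d^2+c*d+a*c+b*d+c+d+1)*h2
      | linear_combination (a^2+b^2+c^2+d^2+1+2*a*c+2*b*d+a*b+a*d+b*c+c*d+2*a+2*b+2*c+2*d)*h2

lemma mat_entry_ne {a b c d : F} (h : Cond a b c d) (i j : Fin 3) :
    mat a b c d i j ≠ 0 := by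
  have h2 : (2:F) = 0 := CharTwo.two_eq_zero
  obtain ⟨hq, h1', h2', h3, h4, h5, h6, h7, h8, h9⟩ := h
  have e5 : a+b+1 ≠ 0 := fun h => h5 (by linear_combination h - h2)
  have e6 : c+d+1 ≠ 0 := fun h => h6 (by linear_combination h - h2)
  have e7 : a+c+1 ≠ 0 := fun h => h7 (by linear_combination h - h2)
  have e8 : b+d+1 ≠ 0 := fun h => h8 (by linear_combination h - h2)
  have e9 : a+b+c+d+1 ≠ 0 := fun h => h9 (by linear_combination h - h2)
  fin_cases i <;> fin_cases j <;> simp [mat] <;>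
    first | exact h1' | exact h2' | exact h3 | exact h4
          | exact e5 | exact e6 | exact e7 | exact e8 | exact e9

set_option maxHeartbeats 3200000 in
lemma mat_minor_ne {a b c d : F} (h : Cond a b c d) (i0 i1 j0 j1 : Fin 3)
    (hi : i0 ≠ i1) (hj : j0 ≠ j1) :
    mat a b c d i0 j0 * mat a b c d i1 j1 - mat a b c d i0 j1 * mat a b c d i1 j0 ≠ 0 := by
  have h2 : (2:F) = 0 := CharTwo.two_eq_zero
  obtain ⟨hq, h1', h2', h3, h4, h5, h6, h7, h8, h9⟩ := h
  have k1 : a*d - b*c ≠ 0 := fun h => h9 (by linear_combination hq - h - b*c*h2)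
  have k2 : a*(c+d+1) - (a+b+1)*c ≠ 0 := fun h => h8 (by linear_combination hq - h - (b*c+c)*h2)
  have k3 : b*(c+d+1) - (a+b+1)*d ≠ 0 := fun h => h7 (by linear_combination hq + h - (b*c+b)*h2)
  have k4 : a*(b+d+1) - b*(a+c+1) ≠ 0 := fun h => h6 (by linear_combination hq - h - (b*c+b)*h2)
  have k5 : a*(a+b+c+d+1) - (a+b+1)*(a+c+1) ≠ 0 := fun h =>
    h4 (by linear_combination hq - h - (b*c+a+b+c)*h2)
  have k6 : b*(a+b+c+d+1) - (a+b+1)*(b+d+1) ≠ 0 := fun h =>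
    h3 (by linear_combination hq + h - (b*c-1)*h2)
  have k7 : c*(b+d+1) - d*(a+c+1) ≠ 0 := fun h => h5 (by linear_combination hq + h - (b*c+c)*h2)
  have k8 : c*(a+b+c+d+1) - (c+d+1)*(a+c+1) ≠ 0 := fun h =>
    h2' (by linear_combination hq + h - (b*c-1)*h2)
  have k9 : d*(a+b+c+d+1) - (c+d+1)*(b+d+1) ≠ 0 := fun h =>
    h1' (by linear_combination hq - h - (b*c+b+c+d)*h2)
  fin_cases i0 <;> fin_cases i1 <;> fin_cases j0 <;> fin_cases j1 <;>
    first
    | exact absurd rfl hi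
    | exact absurd rfl hj
    | (simp only [mat]
       simp [Matrix.vecHead, Matrix.vecTail]
       first
       | exact fun h => k1 (by first | linear_combination h | linear_combination -h)
       | exact fun h => k2 (by first | linear_combination h | linear_combination -h)
       | exact fun h => k3 (by first | linear_combination h | linear_combination -h)
       | exact fun h => k4 (by first | linear_combination h | linear_combination -h)
       | exact fun h => k5 (by first | linear_combination h | linear_combination -h)
       | exact fun h => k6 (by first | linear_combination h | linear_combination -h)
       | exact fun h => k7 (by first | linear_combination h | linear_combination -h)
       | exact fun h => k8 (by first | linear_combination h | linear_combination -h)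
       | exact fun h => k9 (by first | linear_combination h | linear_combination -h))

lemma mat_mds {a b c d : F} (h : Cond a b c d) (k : ℕ) (r c' : Fin k → Fin 3)
    (hr : Function.Injective r) (hc : Function.Injective c') :
    ((mat a b c d).submatrix r c').det ≠ 0 := by
  match k with
  | 0 => simp [Matrix.det_isEmpty]
  | 1 =>
    rw [Matrix.det_fin_one]
    exact mat_entry_ne h (r 0) (c' 0)
  | 2 =>
    rw [Matrix.det_fin_two]
    exact mat_minor_ne h (r 0) (r 1) (c' 0) (c' 1)
      (fun e => absurd (hr e) (by decide)) (fun e => absurd (hc e) (by decide))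
  | 3 =>
    have hrb := Finite.injective_iff_bijective.mp hr
    have hcb := Finite.injective_iff_bijective.mp hc
    set er : Equiv.Perm (Fin 3) := Equiv.ofBijective r hrb with her
    set ec : Equiv.Perm (Fin 3) := Equiv.ofBijective c' hcb with hec
    have h1 : (mat a b c d).submatrix r c'
        = ((mat a b c d).submatrix id ⇑ec).submatrix (⇑er) id := rfl
    have hdet : (mat a b c d).det ≠ 0 :=
      (Matrix.isUnit_det_of_right_inverse (mat_orth h)).ne_zero
    rw [h1, Matrix.det_permute, Matrix.det_permute']
    have hs1 : ((Equiv.Perm.sign er : ℤ) : F) ≠ 0 := by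
      rcases Int.units_eq_one_or (Equiv.Perm.sign er) with h' | h' <;> simp [h']
    have hs2 : ((Equiv.Perm.sign ec : ℤ) : F) ≠ 0 := by
      rcases Int.units_eq_one_or (Equiv.Perm.sign ec) with h' | h' <;> simp [h']
    exact mul_ne_zero hs1 (mul_ne_zero hs2 hdet)
  | (n+4) =>
    exfalso
    have := Fintype.card_le_of_injective r hr
    simp [Fintype.card_fin] at this

lemma recon (M : Matrix (Fin 3) (Fin 3) F) (hO : M * Mᵀ = 1)
    (hM : ∀ (k : ℕ) (r c : Fin k → Fin 3), Function.Injective r → Function.Injective c →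
      (M.submatrix r c).det ≠ 0) :
    Cond (M 0 0) (M 0 1) (M 1 0) (M 1 1) ∧ M = mat (M 0 0) (M 0 1) (M 1 0) (M 1 1) := by
  have h2 : (2:F) = 0 := CharTwo.two_eq_zero
  -- entries nonzero
  have hent : ∀ i j : Fin 3, M i j ≠ 0 := by
    intro i j
    have := hM 1 ![i] ![j] (fun x y _ => Subsingleton.elim x y) (fun x y _ => Subsingleton.elim x y)
    rwa [Matrix.det_fin_one] at this
  have hO' : Mᵀ * M = 1 := mul_eq_one_comm.mp hO
  have hrow : ∀ i : Fin 3, M i 0 + M i 1 + M i 2 = 1 := by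
    intro i
    have hd := congrFun (congrFun hO i) i
    simp [Matrix.mul_apply, Fin.sum_univ_three, Matrix.one_apply] at hd
    have hsq : (M i 0 + M i 1 + M i 2 + 1)^2 = 0 := by
      linear_combination hd + (M i 0 * M i 1 + M i 0 * M i 2 + M i 1 * M i 2 + M i 0 + M i 1 + M i 2 + 1)*h2
    have := pow_eq_zero_iff (n := 2) (by norm_num) |>.mp hsq
    linear_combination this - h2
  have hcol : ∀ j : Fin 3, M 0 j + M 1 j + M 2 j = 1 := by
    intro j
    have hd := congrFun (congrFun hO' j) j
    simp [Matrix.mul_apply, Fin.sum_univ_three, Matrix.one_apply] at hd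
    have hsq : (M 0 j + M 1 j + M 2 j + 1)^2 = 0 := by
      linear_combination hd + (M 0 j * M 1 j + M 0 j * M 2 j + M 1 j * M 2 j + M 0 j + M 1 j + M 2 j + 1)*h2
    have := pow_eq_zero_iff (n := 2) (by norm_num) |>.mp hsq
    linear_combination this - h2
  set a := M 0 0; set b := M 0 1; set c := M 1 0; set d := M 1 1
  have hre0 : M 0 2 = a + b + 1 := by linear_combination hrow 0 - (a+b)*h2
  have hre1 : M 1 2 = c + d + 1 := by linear_combination hrow 1 - (c+d)*h2
  have hce0 : M 2 0 = a + c + 1 := by linear_combination hcol 0 - (a+c)*h2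
  have hce1 : M 2 1 = b + d + 1 := by linear_combination hcol 1 - (b+d)*h2
  have hce2 : M 2 2 = a + b + c + d + 1 := by
    linear_combination hcol 2 - hre0 - hre1 - (a+b+c+d+1)*h2
  have h01 := congrFun (congrFun hO 0) 1
  simp [Matrix.mul_apply, Fin.sum_univ_three, Matrix.one_apply] at h01
  rw [hre0, hre1] at h01
  have hq : a*d + b*c + a + b + c + d = 1 := by
    linear_combination h01 - (a*c + b*d + 1)*h2
  have C5 : a + b ≠ 1 := fun h => hent 0 2 (by rw [hre0]; linear_combination h + h2)
  have C6 : c + d ≠ 1 := fun h => hent 1 2 (by rw [hre1]; linear_combination h + h2)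
  have C7 : a + c ≠ 1 := fun h => hent 2 0 (by rw [hce0]; linear_combination h + h2)
  have C8 : b + d ≠ 1 := fun h => hent 2 1 (by rw [hce1]; linear_combination h + h2)
  have C9 : a + b + c + d ≠ 1 := fun h => hent 2 2 (by rw [hce2]; linear_combination h + h2)
  refine ⟨⟨hq, hent 0 0, hent 0 1, hent 1 0, hent 1 1, C5, C6, C7, C8, C9⟩, ?_⟩
  ext i j
  fin_cases i <;> fin_cases j <;>
    simp [mat, Matrix.vecHead, Matrix.vecTail] <;>
    first
      | rfl
      | exact hre0
      | exact hre1
      | exact hce0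
      | exact hce1
      | exact hce2

end Stmt14

open Stmt14 in
/-- For `m ≥ 3`, the number of `3×3` orthogonal MDS matrices over `F_{2^m}` is
`(2^m - 2) * (2^m - 3) * (2^m - 4)`. -/
theorem stmt_14 {F : Type*} [Field F] [Fintype F] [CharP F 2]
    (m : ℕ) (hm : 3 ≤ m) (hcard : Fintype.card F = 2 ^ m) :
    Nat.card {M : Matrix (Fin 3) (Fin 3) F //
        M * Mᵀ = 1 ∧
        ∀ (k : ℕ) (r c : Fin k → Fin 3), Function.Injective r → Function.Injective c →
          (M.submatrix r c).det ≠ 0} =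
      (2 ^ m - 2) * (2 ^ m - 3) * (2 ^ m - 4) := by
  classical
  have hq8 : 8 ≤ Fintype.card F := by
    rw [hcard]
    calc (8:ℕ) = 2 ^ 3 := by norm_num
    _ ≤ 2 ^ m := Nat.pow_le_pow_right (by norm_num) hm
  have e : {M : Matrix (Fin 3) (Fin 3) F //
        M * Mᵀ = 1 ∧
        ∀ (k : ℕ) (r c : Fin k → Fin 3), Function.Injective r → Function.Injective c →
          (M.submatrix r c).det ≠ 0} ≃
      {p : F × F × F × F // Cond p.1 p.2.1 p.2.2.1 p.2.2.2} :=
    { toFun := fun x => ⟨(x.1 0 0, x.1 0 1, x.1 1 0, x.1 1 1), (recon x.1 x.2.1 x.2.2).1⟩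
      invFun := fun p => ⟨mat p.1.1 p.1.2.1 p.1.2.2.1 p.1.2.2.2,
        mat_orth p.2, fun k r c hr hc => mat_mds p.2 k r c hr hc⟩
      left_inv := fun x => Subtype.ext (recon x.1 x.2.1 x.2.2).2.symm
      right_inv := fun p => Subtype.ext (by
        obtain ⟨⟨a, b, c, d⟩, hp⟩ := p
        simp [mat, Matrix.vecHead, Matrix.vecTail]) }
  rw [Nat.card_congr e, count_params hq8, hcard]
end
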